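/- Let Ψ and Φ be orthogonal quantum Latin squares of order 6 in standard form. If some entry Ψ_{ij} of Ψ has weight 3, then every entry Φ_{kj} of Φ in the same column j has weight at most 2. -/

import Mathlib

noncomputable section

/-- A quantum Latin square of order `n`: an `n × n` matrix of vectors in `ℂ^n`
such that every row and every column is an orthonormal family. -/
def IsQLS {n : ℕ} (Ψ : Fin n → Fin n → EuclideanSpace ℂ (Fin n)) : Prop :=
  (∀ i, Orthonormal ℂ (fun j => Ψ i j)) ∧ (∀ j, Orthonormal ℂ (fun i => Ψ i j))

/-- Two quantum Latin squares are orthogonal: for distinct cells `(i,j) ≠ (k,l)`,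
`⟨Ψ_{ij}, Ψ_{kl}⟩ · ⟨Φ_{ij}, Φ_{kl}⟩ = 0`; equivalently, the `n²` vectors
`Ψ_{ij} ⊗ Φ_{ij}` form an orthonormal basis of `ℂ^n ⊗ ℂ^n`. -/
def OrthQLS {n : ℕ} (Ψ Φ : Fin n → Fin n → EuclideanSpace ℂ (Fin n)) : Prop :=
  ∀ i j k l, (i, j) ≠ (k, l) →
    (inner ℂ (Ψ i j) (Ψ k l) : ℂ) * (inner ℂ (Φ i j) (Φ k l) : ℂ) = 0

/-- The weight of a vector in `ℂ^n`: the number of nonzero coordinates. -/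
def weight {n : ℕ} (v : EuclideanSpace ℂ (Fin n)) : ℕ :=
  (Finset.univ.filter fun k => v k ≠ 0).card

/-- A quantum Latin square of order 6 is in standard form if its first row is
`(e₁, …, e₆)`, the standard basis vectors in order. -/
def StdForm (Ψ : Fin 6 → Fin 6 → EuclideanSpace ℂ (Fin 6)) : Prop :=
  ∀ j, Ψ 0 j = EuclideanSpace.single j (1 : ℂ)

/-!
Fix the column `j` and let `A r`, `B r` be the supports of `Ψ r j` and `Φ r j`. Each column is an
orthonormal basis, so each family is the zero pattern of a unitary matrix: two rows meet in `≠ 1`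
points, so do two columns (Parseval), and at most `|P|` rows are supported inside `P` (Bessel).
Standard form makes row `0` equal to `{j}` in both families, and orthogonality with the cells of
the first row makes `A r` and `B r` disjoint for `r ≠ 0`.

Let `S = A i` have size 3 and suppose `W = B m` has size at least 3; both lie in the five
coordinates other than `j`. If `|S ∪ W| = 3` then `S = W`, and every row has `A r` or `B r` inside
the two-point complement of `S`, which is too many rows for the Bessel bound. If `|S ∪ W| = 4`,
the remaining coordinate `x` satisfies `A m = B i = {x}`, and column orthogonality of `A` on `S`
produces rows `A r = {a, c}` and `A r' = {b, c}` meeting in one point. If `|S ∪ W| = 5`, then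
`S ∩ W = {c}`, `A m = S \ W`, `B i = W \ S`, and the columns through `c` produce a row with
`A r = S` and a row with `B r' = W`; then four rows of `A` lie inside `S`.
-/

open Finset

section Support

variable {𝕜 α ι : Type*} [RCLike 𝕜] [Fintype α]

def coordSupport (v : EuclideanSpace 𝕜 α) : Finset α := univ.filter fun t => v t ≠ 0

@[simp] lemma mem_coordSupport {v : EuclideanSpace 𝕜 α} {t : α} : t ∈ coordSupport v ↔ v t ≠ 0 := by
  simp [coordSupport]

lemma card_filter_ne_zero_ne_one_of_sum_eq_zero {M : Type*} [AddCommMonoid M] [DecidableEq M]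
    {s : Finset ι} {f : ι → M} (h : ∑ x ∈ s, f x = 0) : (s.filter (f · ≠ 0)).card ≠ 1 := by
  intro h1
  obtain ⟨a, ha⟩ := card_eq_one.mp h1
  have ha' : a ∈ s.filter (f · ≠ 0) := by rw [ha]; exact mem_singleton_self a
  have hsum := sum_filter_ne_zero (f := f) s
  rw [ha, sum_singleton, h] at hsum
  exact (mem_filter.mp ha').2 hsum

lemma card_coordSupport_inter_ne_one [DecidableEq α] {x y : EuclideanSpace 𝕜 α}
    (h : inner 𝕜 x y = 0) : (coordSupport x ∩ coordSupport y).card ≠ 1 := by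
  have hxy : coordSupport x ∩ coordSupport y = univ.filter fun t => inner 𝕜 (x t) (y t) ≠ 0 := by
    ext t; simp [coordSupport, RCLike.inner_apply, and_comm]
  rw [hxy]
  exact card_filter_ne_zero_ne_one_of_sum_eq_zero (by rwa [← PiLp.inner_apply])

lemma coordSupport_nonempty {v : EuclideanSpace 𝕜 α} (hv : v ≠ 0) : (coordSupport v).Nonempty := by
  contrapose! hv
  ext t
  simpa using eq_empty_iff_forall_notMem.mp hv t

lemma coordSupport_single [DecidableEq α] (t : α) :
    coordSupport (EuclideanSpace.single t (1 : 𝕜)) = {t} := by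
  ext s; simp [PiLp.single_apply]

end Support

section Pattern

variable {𝕜 α ι : Type*} [RCLike 𝕜] [Fintype α] [Fintype ι] [DecidableEq α]

lemma Orthonormal.card_filter_coordSupport_subset_le {v : ι → EuclideanSpace 𝕜 α}
    (hv : Orthonormal 𝕜 v) (P : Finset α) :
    (univ.filter fun r => coordSupport (v r) ⊆ P).card ≤ P.card := by
  set F := univ.filter fun r => coordSupport (v r) ⊆ P
  have hnorm : ∀ r ∈ F, ∑ t ∈ P, ‖v r t‖ ^ 2 = 1 := by
    intro r hr
    rw [← one_pow 2, ← (hv.1 r : ‖v r‖ = 1), EuclideanSpace.norm_sq_eq]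
    refine sum_subset (subset_univ P) fun t _ ht => ?_
    have : v r t = 0 := by
      by_contra h0
      exact ht ((mem_filter.mp hr).2 (mem_coordSupport.mpr h0))
    simp [this]
  have hbessel : ∀ t, ∑ r ∈ F, ‖v r t‖ ^ 2 ≤ 1 := by
    intro t
    simpa [EuclideanSpace.inner_single_right] using
      hv.sum_inner_products_le (s := F) (EuclideanSpace.single t (1 : 𝕜))
  have : (F.card : ℝ) ≤ P.card :=
    calc (F.card : ℝ) = ∑ r ∈ F, ∑ t ∈ P, ‖v r t‖ ^ 2 := by
          rw [sum_congr rfl hnorm]; simp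
      _ = ∑ t ∈ P, ∑ r ∈ F, ‖v r t‖ ^ 2 := sum_comm
      _ ≤ ∑ t ∈ P, 1 := sum_le_sum fun t _ => hbessel t
      _ = P.card := by simp
  exact_mod_cast this

lemma OrthonormalBasis.card_filter_mem_coordSupport_ne_one
    (b : OrthonormalBasis ι 𝕜 (EuclideanSpace 𝕜 α)) {t t' : α} (h : t ≠ t') :
    (univ.filter fun r => t ∈ coordSupport (b r) ∧ t' ∈ coordSupport (b r)).card ≠ 1 := by
  have hparseval := b.sum_inner_mul_inner (EuclideanSpace.single t (1 : 𝕜))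
    (EuclideanSpace.single t' (1 : 𝕜))
  simp only [EuclideanSpace.inner_single_left, EuclideanSpace.inner_single_right, map_one,
    one_mul, PiLp.single_apply, h.symm, if_false, map_zero] at hparseval
  convert card_filter_ne_zero_ne_one_of_sum_eq_zero hparseval using 3
  simp

end Pattern

lemma Finset.eq_of_subset_of_card_le_two {α : Type*} {s P : Finset α} (hsP : s ⊆ P)
    (hP : P.card ≤ 2) (hs : s.Nonempty) (hs1 : s.card ≠ 1) : s = P :=
  eq_of_subset_of_card_le hsP (by have := hs.card_pos; omega)

lemma Finset.Nonempty.exists_mem_sdiff_subset_singleton {α : Type*} [DecidableEq α]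
    {s t : Finset α} (hs : s.Nonempty) (h : (s \ t).card ≤ 1) : ∃ c ∈ s, s \ t ⊆ {c} := by
  rcases (s \ t).eq_empty_or_nonempty with he | ⟨c, hc⟩
  · obtain ⟨c, hc⟩ := hs
    exact ⟨c, hc, by simp [he]⟩
  · exact ⟨c, (mem_sdiff.mp hc).1, fun x hx => mem_singleton.mpr (card_le_one.mp h x hx c hc)⟩

section UnitaryPattern

variable {α ι : Type*} [Fintype ι] [DecidableEq α]

/-- The combinatorial shadow of the zero pattern of a unitary matrix with row supports `A r`. -/
structure IsUnitaryPattern (A : ι → Finset α) : Prop where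
  nonempty : ∀ r, (A r).Nonempty
  card_inter_ne_one_of_ne : ∀ ⦃r l⦄, r ≠ l → (A r ∩ A l).card ≠ 1
  card_filter_mem_ne_one : ∀ ⦃t t'⦄, t ≠ t' →
    (univ.filter fun r => t ∈ A r ∧ t' ∈ A r).card ≠ 1
  card_filter_subset_le : ∀ P, (univ.filter fun r => A r ⊆ P).card ≤ P.card

lemma Orthonormal.isUnitaryPattern {𝕜 : Type*} [RCLike 𝕜] [Fintype α]
    {v : ι → EuclideanSpace 𝕜 α} (hv : Orthonormal 𝕜 v)
    (hcard : Fintype.card ι = Fintype.card α) :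
    IsUnitaryPattern fun r => coordSupport (v r) := by
  let b : OrthonormalBasis ι 𝕜 (EuclideanSpace 𝕜 α) := .mk hv
    (hv.linearIndependent.span_eq_top_of_card_eq_finrank' (by simp [hcard])).ge
  exact
    { nonempty r := coordSupport_nonempty (hv.ne_zero r)
      card_inter_ne_one_of_ne _ _ h := card_coordSupport_inter_ne_one (hv.inner_eq_zero h)
      card_filter_mem_ne_one _ _ h := by
        simpa [b] using b.card_filter_mem_coordSupport_ne_one h
      card_filter_subset_le := hv.card_filter_coordSupport_subset_le }

namespace IsUnitaryPattern

variable {A : ι → Finset α} {i r l : ι} {t t' : α}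

lemma notMem_of_eq_singleton (hA : IsUnitaryPattern A) (hr : A r = {t}) (hl : l ≠ r) :
    t ∉ A l := by
  intro ht
  apply hA.card_inter_ne_one_of_ne hl
  rw [hr, inter_singleton_of_mem ht, card_singleton]

lemma card_inter_ne_one (hA : IsUnitaryPattern A) (r : ι) (hi : (A i).card ≠ 1) :
    (A r ∩ A i).card ≠ 1 := by
  obtain rfl | hri := eq_or_ne r i
  · rwa [inter_self]
  · exact hA.card_inter_ne_one_of_ne hri

lemma exists_ne_mem_mem (hA : IsUnitaryPattern A) (ht : t ∈ A i) (ht' : t' ∈ A i)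
    (htt' : t ≠ t') : ∃ r ≠ i, t ∈ A r ∧ t' ∈ A r := by
  have hi : i ∈ univ.filter fun r => t ∈ A r ∧ t' ∈ A r := by simp [ht, ht']
  have hcard := hA.card_filter_mem_ne_one htt'
  have : 1 < (univ.filter fun r => t ∈ A r ∧ t' ∈ A r).card := by
    have := card_pos.mpr ⟨i, hi⟩; omega
  obtain ⟨r, hr, hri⟩ := exists_mem_ne this i
  exact ⟨r, hri, (mem_filter.mp hr).2⟩

lemma ne_pair_of_eq_pair (hA : IsUnitaryPattern A) {a b c : α} {r₁ r₂ : ι}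
    (h₁ : A r₁ = {a, c}) (hab : a ≠ b) (hac : a ≠ c) : A r₂ ≠ {b, c} := by
  intro h₂
  have hr₁₂ : r₁ ≠ r₂ := by
    rintro rfl
    have : a ∈ ({b, c} : Finset α) := h₂ ▸ h₁ ▸ mem_insert_self a {c}
    simp [hab, hac] at this
  apply hA.card_inter_ne_one_of_ne hr₁₂
  rw [h₁, h₂, card_eq_one]
  exact ⟨c, by ext t; simp only [mem_inter, mem_insert, mem_singleton]; grind⟩

end IsUnitaryPattern

end UnitaryPattern

section PatternPair

variable {α ι : Type*} [Fintype ι] [DecidableEq α]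

/-- The supports of one column of a pair of orthogonal quantum Latin squares in standard form:
`r₀` is the first row and `j` the column. -/
structure IsOrthogonalPatternPair (A B : ι → Finset α) (r₀ : ι) (j : α) : Prop where
  left : IsUnitaryPattern A
  right : IsUnitaryPattern B
  left_base : A r₀ = {j}
  right_base : B r₀ = {j}
  disjoint : ∀ ⦃r⦄, r ≠ r₀ → Disjoint (A r) (B r)

namespace IsOrthogonalPatternPair

variable {A B : ι → Finset α} {r₀ i m r : ι} {j : α}

lemma symm (h : IsOrthogonalPatternPair A B r₀ j) : IsOrthogonalPatternPair B A r₀ j :=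
  ⟨h.right, h.left, h.right_base, h.left_base, fun _ hr => (h.disjoint hr).symm⟩

lemma ne_base (h : IsOrthogonalPatternPair A B r₀ j) (hr : (A r).card ≠ 1) : r ≠ r₀ := by
  rintro rfl
  simp [h.left_base] at hr

lemma subset_erase [Fintype α] (h : IsOrthogonalPatternPair A B r₀ j) (hr : r ≠ r₀) :
    A r ⊆ univ.erase j := fun t ht =>
  mem_erase.mpr ⟨fun htj => h.left.notMem_of_eq_singleton h.left_base hr (htj ▸ ht), mem_univ t⟩

lemma card_union_ne_three [Fintype α] (h : IsOrthogonalPatternPair A B r₀ j)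
    (hι : Fintype.card ι = 6) (hα : Fintype.card α = 6)
    (hS : (A i).card = 3) (hW : 3 ≤ (B m).card) : (A i ∪ B m).card ≠ 3 := by
  classical
  intro hU
  have hSW : B m = A i :=
    (eq_of_subset_of_card_le subset_union_right (by omega)).trans
      (eq_of_subset_of_card_le subset_union_left (by omega)).symm
  set D := univ.erase j \ A i
  have hD : D.card = 2 := by
    rw [card_sdiff_of_subset (h.subset_erase (h.ne_base (by omega))), card_erase_of_mem
      (mem_univ j), card_univ, hα, hS]
  -- `A r ∩ A i` and `B r ∩ A i` are disjoint subsets of the 3-set `A i`, neither of size 1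
  have hcover : ∀ r ≠ r₀, A r ⊆ D ∨ B r ⊆ D := by
    intro r hr
    have hA1 := h.left.card_inter_ne_one r (i := i) (by omega)
    have hB1 := h.right.card_inter_ne_one r (i := m) (by omega)
    rw [hSW] at hB1
    have hdisj : Disjoint (A r ∩ A i) (B r ∩ A i) :=
      (h.disjoint hr).mono inter_subset_left inter_subset_left
    have hle : (A r ∩ A i ∪ B r ∩ A i).card ≤ (A i).card :=
      card_le_card (union_subset inter_subset_right inter_subset_right)
    rw [card_union_of_disjoint hdisj] at hle
    rcases (show (A r ∩ A i).card = 0 ∨ (B r ∩ A i).card = 0 by omega) with h0 | h0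
    · exact .inl (subset_sdiff.mpr ⟨h.subset_erase hr,
        disjoint_iff_inter_eq_empty.mpr (card_eq_zero.mp h0)⟩)
    · exact .inr (subset_sdiff.mpr ⟨h.symm.subset_erase hr,
        disjoint_iff_inter_eq_empty.mpr (card_eq_zero.mp h0)⟩)
  have : (univ.erase r₀).card ≤ 4 :=
    calc (univ.erase r₀).card
        ≤ ((univ.filter fun r => A r ⊆ D) ∪ univ.filter fun r => B r ⊆ D).card :=
          card_le_card fun r hr => by
            simpa [mem_union, mem_filter] using hcover r (ne_of_mem_erase hr)
      _ ≤ D.card + D.card :=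
          (card_union_le _ _).trans (add_le_add (h.left.card_filter_subset_le D)
            (h.right.card_filter_subset_le D))
      _ = 4 := by rw [hD]
  rw [card_erase_of_mem (mem_univ r₀), card_univ, hι] at this
  omega

lemma subset_sdiff_union [Fintype α] (h : IsOrthogonalPatternPair A B r₀ j) (hm : m ≠ r₀)
    (hi : (A i).card ≠ 1) (hsd : (A i \ B m).card ≤ 1) :
    A m ⊆ univ.erase j \ (A i ∪ B m) := by
  refine subset_sdiff.mpr ⟨h.subset_erase hm, disjoint_union_right.mpr ⟨?_, h.disjoint hm⟩⟩
  have hsub : A m ∩ A i ⊆ A i \ B m := fun t ht =>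
    mem_sdiff.mpr ⟨(mem_inter.mp ht).2, disjoint_left.mp (h.disjoint hm) (mem_inter.mp ht).1⟩
  have := h.left.card_inter_ne_one m hi
  have := card_le_card hsub
  rw [disjoint_iff_inter_eq_empty, ← card_eq_zero]
  omega

lemma eq_pair_of_mem_of_mem (h : IsOrthogonalPatternPair A B r₀ j) {U : Finset α} {a c : α}
    (hr : r ≠ r₀) (hrm : r ≠ m) (hAU : A r ⊆ U) (hBU : B r ⊆ U) (hU : U.card = 4)
    (ha : a ∈ A r) (hc : c ∈ A r) (hac : a ≠ c) (hUW : U \ {a, c} ⊆ B m) :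
    A r = {a, c} := by
  have hac_sub : {a, c} ⊆ A r := insert_subset ha (singleton_subset_iff.mpr hc)
  have hpair : {a, c} ⊆ U := hac_sub.trans hAU
  have hBr : B r ⊆ U \ {a, c} :=
    subset_sdiff.mpr ⟨hBU, (h.disjoint hr).symm.mono_right hac_sub⟩
  have hBr' : B r = U \ {a, c} := by
    refine eq_of_subset_of_card_le_two hBr ?_ (h.right.nonempty r) ?_
    · rw [card_sdiff_of_subset hpair, hU, card_pair hac]
    · have := h.right.card_inter_ne_one_of_ne hrm
      rwa [inter_eq_left.mpr (hBr.trans hUW)] at this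
  refine subset_antisymm ?_ hac_sub
  rw [← Finset.sdiff_sdiff_eq_self hpair, ← hBr']
  exact subset_sdiff.mpr ⟨hAU, h.disjoint hr⟩

lemma exists_eq_pair [Fintype α] (h : IsOrthogonalPatternPair A B r₀ j) {x a c : α}
    (hU : (A i ∪ B m).card = 4) (hx : univ.erase j \ (A i ∪ B m) = {x}) (hAm : A m = {x})
    (hBi : B i = {x}) (hc : c ∈ A i) (hcW : A i \ B m ⊆ {c}) (ha : a ∈ A i) (hac : a ≠ c) :
    ∃ r, A r = {a, c} := by
  have hsubU : ∀ s ⊆ univ.erase j, x ∉ s → s ⊆ A i ∪ B m := by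
    intro s hs hxs t ht
    by_contra htU
    have : t ∈ univ.erase j \ (A i ∪ B m) := mem_sdiff.mpr ⟨hs ht, htU⟩
    rw [hx, mem_singleton] at this
    exact hxs (this ▸ ht)
  obtain ⟨r, hri, har, hcr⟩ := h.left.exists_ne_mem_mem ha hc hac
  have hr0 : r ≠ r₀ := by
    rintro rfl
    rw [h.left_base, mem_singleton] at har hcr
    exact hac (har.trans hcr.symm)
  have hrm : r ≠ m := by
    rintro rfl
    rw [hAm, mem_singleton] at har hcr
    exact hac (har.trans hcr.symm)
  refine ⟨r, h.eq_pair_of_mem_of_mem hr0 hrm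
    (hsubU _ (h.subset_erase hr0) (h.left.notMem_of_eq_singleton hAm hrm))
    (hsubU _ (h.symm.subset_erase hr0) (h.right.notMem_of_eq_singleton hBi hri)) hU har hcr hac
    fun t ht => ?_⟩
  simp only [mem_sdiff, mem_union, mem_insert, mem_singleton, not_or] at ht
  by_contra htW
  exact ht.2.2 (mem_singleton.mp (hcW (mem_sdiff.mpr ⟨ht.1.resolve_right htW, htW⟩)))

lemma card_union_ne_four [Fintype α] (h : IsOrthogonalPatternPair A B r₀ j)
    (hα : Fintype.card α = 6) (hS : (A i).card = 3) (hW : 3 ≤ (B m).card) :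
    (A i ∪ B m).card ≠ 4 := by
  intro hU
  have hi0 : i ≠ r₀ := h.ne_base (by omega)
  have hm0 : m ≠ r₀ := h.symm.ne_base (by omega)
  have hUT : A i ∪ B m ⊆ univ.erase j :=
    union_subset (h.subset_erase hi0) (h.symm.subset_erase hm0)
  obtain ⟨x, hx⟩ : ∃ x, univ.erase j \ (A i ∪ B m) = {x} := card_eq_one.mp (by
    rw [card_sdiff_of_subset hUT, card_erase_of_mem (mem_univ _), card_univ, hα, hU])
  have h1 := card_union_add_card_inter (A i) (B m)
  have h2 := card_sdiff_add_card_inter (A i) (B m)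
  have h3 := card_sdiff_add_card_inter (B m) (A i)
  rw [inter_comm] at h3
  have hAm : A m = {x} := (h.left.nonempty m).subset_singleton_iff.mp
    (hx ▸ h.subset_sdiff_union hm0 (by omega) (by omega))
  have hBi : B i = {x} := (h.right.nonempty i).subset_singleton_iff.mp
    (hx ▸ union_comm (B m) (A i) ▸ h.symm.subset_sdiff_union hi0 (by omega) (by omega))
  obtain ⟨c, hcS, hcW⟩ := (h.left.nonempty i).exists_mem_sdiff_subset_singleton
    (t := B m) (by omega)
  obtain ⟨a, b, hab, hab'⟩ := card_eq_two.mp (by rw [card_erase_of_mem hcS, hS] :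
    ((A i).erase c).card = 2)
  have ha : a ∈ (A i).erase c := hab' ▸ mem_insert_self a {b}
  have hb : b ∈ (A i).erase c := hab' ▸ mem_insert_of_mem (mem_singleton_self b)
  obtain ⟨r₁, hr₁⟩ := h.exists_eq_pair hU hx hAm hBi hcS hcW (mem_of_mem_erase ha)
    (ne_of_mem_erase ha)
  obtain ⟨r₂, hr₂⟩ := h.exists_eq_pair hU hx hAm hBi hcS hcW (mem_of_mem_erase hb)
    (ne_of_mem_erase hb)
  exact h.left.ne_pair_of_eq_pair hr₁ hab (ne_of_mem_erase ha) hr₂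

lemma eq_sdiff_of_union_eq [Fintype α] (h : IsOrthogonalPatternPair A B r₀ j) (hm : m ≠ r₀)
    (hi : (A i).card ≠ 1) (hU : A i ∪ B m = univ.erase j) (hsd : (A i \ B m).card ≤ 2) :
    A m = A i \ B m := by
  have hsub : A m ⊆ A i \ B m := fun t ht =>
    have htW := disjoint_left.mp (h.disjoint hm) ht
    mem_sdiff.mpr ⟨(mem_union.mp (hU ▸ h.subset_erase hm ht)).resolve_right htW, htW⟩
  refine eq_of_subset_of_card_le_two hsub hsd (h.left.nonempty m) ?_
  have := h.left.card_inter_ne_one m hi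
  rwa [inter_eq_left.mpr (hsub.trans sdiff_subset)] at this

lemma eq_of_subset_of_union_eq [Fintype α] (h : IsOrthogonalPatternPair A B r₀ j)
    (hU : A i ∪ B m = univ.erase j) (hBi : B i = B m \ A i) (hBi2 : (B i).card ≤ 2)
    (hr : r ≠ r₀) (hri : r ≠ i) (hSr : A i ⊆ A r) : A r = A i := by
  have hBr : B r ⊆ B i := fun t ht =>
    have htS : t ∉ A i := fun hts => disjoint_left.mp (h.disjoint hr) (hSr hts) ht
    hBi ▸ mem_sdiff.mpr
      ⟨(mem_union.mp (hU ▸ h.symm.subset_erase hr ht)).resolve_left htS, htS⟩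
  have hBr' : B r = B i := by
    refine eq_of_subset_of_card_le_two hBr hBi2 (h.right.nonempty r) ?_
    have := h.right.card_inter_ne_one_of_ne hri
    rwa [inter_eq_left.mpr hBr] at this
  refine subset_antisymm (fun t ht => ?_) hSr
  by_contra htS
  exact disjoint_left.mp (h.disjoint hr) ht (hBr' ▸ hBi ▸ mem_sdiff.mpr
    ⟨(mem_union.mp (hU ▸ h.subset_erase hr ht)).resolve_left htS, htS⟩)

lemma exists_ne_eq [Fintype α] (h : IsOrthogonalPatternPair A B r₀ j) {c : α}
    (hU : A i ∪ B m = univ.erase j) (hAm : A m = A i \ B m) (hBi : B i = B m \ A i)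
    (hAm2 : (A m).card ≤ 2) (hBi2 : (B i).card ≤ 2) (hc : A i ∩ B m = {c}) :
    ∃ r, r ≠ r₀ ∧ r ≠ i ∧ r ≠ m ∧ A r = A i := by
  obtain ⟨hcS, hcW⟩ := mem_inter.mp (hc ▸ mem_singleton_self c)
  obtain ⟨p, hp⟩ := h.left.nonempty m
  obtain ⟨hpS, hpW⟩ := mem_sdiff.mp (hAm ▸ hp)
  have hpc : p ≠ c := fun e => hpW (e ▸ hcW)
  obtain ⟨r, hri, hpr, hcr⟩ := h.left.exists_ne_mem_mem hpS hcS hpc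
  have hr0 : r ≠ r₀ := by
    rintro rfl
    rw [h.left_base, mem_singleton] at hpr hcr
    exact hpc (hpr.trans hcr.symm)
  have hrm : r ≠ m := by
    rintro rfl
    rw [hAm] at hcr
    exact (mem_sdiff.mp hcr).2 hcW
  have hAmr : A m ⊆ A r := by
    have hrm' : A r ∩ A m = A m := eq_of_subset_of_card_le_two inter_subset_right hAm2
      ⟨p, mem_inter.mpr ⟨hpr, hp⟩⟩ (h.left.card_inter_ne_one_of_ne hrm)
    exact hrm' ▸ inter_subset_left
  refine ⟨r, hr0, hri, hrm, h.eq_of_subset_of_union_eq hU hBi hBi2 hr0 hri fun t ht => ?_⟩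
  by_cases htW : t ∈ B m
  · have : t ∈ A i ∩ B m := mem_inter.mpr ⟨ht, htW⟩
    rw [hc, mem_singleton] at this
    exact this ▸ hcr
  · exact hAmr (hAm ▸ mem_sdiff.mpr ⟨ht, htW⟩)

lemma card_union_ne_five [Fintype α] (h : IsOrthogonalPatternPair A B r₀ j)
    (hα : Fintype.card α = 6) (hS : (A i).card = 3) (hW : 3 ≤ (B m).card) :
    (A i ∪ B m).card ≠ 5 := by
  classical
  intro hU
  have hi0 : i ≠ r₀ := h.ne_base (by omega)
  have hm0 : m ≠ r₀ := h.symm.ne_base (by omega)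
  have hUT : A i ∪ B m = univ.erase j :=
    eq_of_subset_of_card_le (union_subset (h.subset_erase hi0) (h.symm.subset_erase hm0))
      (by rw [card_erase_of_mem (mem_univ _), card_univ, hα, hU])
  have h1 := card_union_add_card_inter (A i) (B m)
  have h2 := card_sdiff_add_card_inter (A i) (B m)
  have h3 := card_sdiff_add_card_inter (B m) (A i)
  rw [inter_comm] at h3
  have hAm := h.eq_sdiff_of_union_eq hm0 (by omega) hUT (by omega)
  have hBi := h.symm.eq_sdiff_of_union_eq hi0 (by omega) (union_comm (B m) (A i) ▸ hUT)
    (by omega)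
  have hAm1 := h.left.card_inter_ne_one m (i := i) (by omega)
  rw [hAm, inter_eq_left.mpr sdiff_subset] at hAm1
  have hAm0 := (h.left.nonempty m).card_pos
  rw [hAm] at hAm0
  obtain ⟨c, hc⟩ := card_eq_one.mp (show (A i ∩ B m).card = 1 by omega)
  obtain ⟨hcS, hcW⟩ := mem_inter.mp (hc ▸ mem_singleton_self c)
  obtain ⟨r, hr0, hri, hrm, hr⟩ :=
    h.exists_ne_eq hUT hAm hBi (by rw [hAm]; omega) (by rw [hBi]; omega) hc
  obtain ⟨r', hr'0, hr'm, hr'i, hr'⟩ := h.symm.exists_ne_eq (union_comm (B m) (A i) ▸ hUT) hBi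
    hAm (by rw [hBi]; omega) (by rw [hAm]; omega) (inter_comm (B m) (A i) ▸ hc)
  have him : i ≠ m := fun e => disjoint_left.mp (h.disjoint hi0) hcS (e ▸ hcW)
  have hrr' : r ≠ r' := by
    rintro rfl
    exact disjoint_left.mp (h.disjoint hr0) (hr ▸ hcS) (hr' ▸ hcW)
  have hAr' : A r' ⊆ A i := fun t ht =>
    (mem_union.mp (hUT ▸ h.subset_erase hr'0 ht)).resolve_right fun htW =>
      disjoint_left.mp (h.disjoint hr'0) ht (hr' ▸ htW)
  have hsub : {i, m, r, r'} ⊆ univ.filter fun l => A l ⊆ A i := by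
    intro l hl
    simp only [mem_insert, mem_singleton] at hl
    rcases hl with rfl | rfl | rfl | rfl <;> simp [hAm, hr, hAr']
  have hcard : ({i, m, r, r'} : Finset ι).card = 4 := by
    rw [card_insert_of_notMem, card_insert_of_notMem, card_pair hrr'] <;>
      simp [him, hri.symm, hr'i.symm, hrm.symm, hr'm.symm]
  have := (card_le_card hsub).trans (h.left.card_filter_subset_le (A i))
  omega

theorem card_le_two [Fintype α] (h : IsOrthogonalPatternPair A B r₀ j)
    (hι : Fintype.card ι = 6) (hα : Fintype.card α = 6) (hS : (A i).card = 3) (m : ι) :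
    (B m).card ≤ 2 := by
  by_contra! hW
  have hU3 : 3 ≤ (A i ∪ B m).card := hS ▸ card_le_card subset_union_left
  have hU5 : (A i ∪ B m).card ≤ 5 := by
    simpa [hα] using card_le_card (union_subset (h.subset_erase (h.ne_base (by omega)))
      (h.symm.subset_erase (h.symm.ne_base (by omega))))
  obtain hU | hU | hU : (A i ∪ B m).card = 3 ∨ (A i ∪ B m).card = 4 ∨ (A i ∪ B m).card = 5 := by
    omega
  · exact h.card_union_ne_three hι hα hS hW hU
  · exact h.card_union_ne_four hα hS hW hU
  · exact h.card_union_ne_five hα hS hW hU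

end IsOrthogonalPatternPair

end PatternPair

lemma isOrthogonalPatternPair_column {Ψ Φ : Fin 6 → Fin 6 → EuclideanSpace ℂ (Fin 6)}
    (hΨ : IsQLS Ψ) (hΦ : IsQLS Φ) (hO : OrthQLS Ψ Φ) (hsΨ : StdForm Ψ) (hsΦ : StdForm Φ)
    (j : Fin 6) :
    IsOrthogonalPatternPair (fun r => coordSupport (Ψ r j)) (fun r => coordSupport (Φ r j)) 0 j
    where
  left := (hΨ.2 j).isUnitaryPattern rfl
  right := (hΦ.2 j).isUnitaryPattern rfl
  left_base := by simp only [hsΨ j, coordSupport_single]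
  right_base := by simp only [hsΦ j, coordSupport_single]
  disjoint r hr := by
    refine disjoint_left.mpr fun t hΨt hΦt => ?_
    have h0 := hO r j 0 t (by simp [hr])
    rw [hsΨ t, hsΦ t, EuclideanSpace.inner_single_right, EuclideanSpace.inner_single_right] at h0
    simp only [one_mul, mul_eq_zero, map_eq_zero] at h0
    exact h0.elim (mem_coordSupport.mp hΨt) (mem_coordSupport.mp hΦt)

/-- If one of two orthogonal quantum Latin squares of order 6 in standard form has an
entry of weight three, then the other square has only entries of weight at most two in
that column. -/
theorem column_of_weight_three (Ψ Φ : Fin 6 → Fin 6 → EuclideanSpace ℂ (Fin 6))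
    (hΨ : IsQLS Ψ) (hΦ : IsQLS Φ) (hO : OrthQLS Ψ Φ)
    (hsΨ : StdForm Ψ) (hsΦ : StdForm Φ)
    (i j : Fin 6) (h : weight (Ψ i j) = 3) :
    ∀ k, weight (Φ k j) ≤ 2 :=
  (isOrthogonalPatternPair_column hΨ hΦ hO hsΨ hsΦ j).card_le_two (by simp) (by simp) h
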